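/- Fix σ ∈ ({0,1})^T and t ∈ Fin T, and let σ' = σ(t) flip the first t bits of σ. With bal^σ defined by bal^σ 0 = 0, and bal^σ (τ+1) = bal^σ τ + v τ if σ τ = 0, bal^σ (τ+1) = bal^σ τ - min (bal^σ τ) (V τ) if σ τ = 1 (v τ, V τ ≥ 0), one has bal^σ t + bal^{σ'} t ≥ bal* t, where bal* is the greedy balance (bal* 0 = 0, bal* (τ+1) = bal* τ + v τ - min (bal* τ) (V τ)). -/
import Mathlib


/-- Balance of the strategy encoded by `σ`: at stage `τ`, if `σ τ = false`
(give-for-free) deposit the full value `v τ`; if `σ τ = true` spend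
`min (balance) (V τ)`. -/
noncomputable def balSig (v V : ℕ → ℝ) (σ : ℕ → Bool) : ℕ → ℝ
  | 0 => 0
  | (τ + 1) =>
    if σ τ then balSig v V σ τ - min (balSig v V σ τ) (V τ)
    else balSig v V σ τ + v τ

/-- Balance of the greedy strategy: deposit the full value and spend
`min (balance) (V τ)` at every stage. -/
noncomputable def balGreedy (v V : ℕ → ℝ) : ℕ → ℝ
  | 0 => 0
  | (τ + 1) => balGreedy v V τ + v τ - min (balGreedy v V τ) (V τ)

lemma balSig_nonneg (v V : ℕ → ℝ) (hv : ∀ n, 0 ≤ v n) (σ : ℕ → Bool) :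
    ∀ τ, 0 ≤ balSig v V σ τ := by
  intro τ
  induction τ with
  | zero => simp [balSig]
  | succ n ih =>
    cases h : σ n
    · simp only [balSig, h, if_false, Bool.false_eq_true]
      linarith [hv n]
    · simp only [balSig, h, if_true]
      linarith [min_le_left (balSig v V σ n) (V n)]

/-- Pairing inequality: the balances of `σ` and of the string obtained by
flipping the first `t` bits of `σ` jointly dominate the greedy balance. -/
theorem pairing_balance_bound (v V : ℕ → ℝ)
    (hv : ∀ n, 0 ≤ v n) (hV : ∀ n, 0 ≤ V n)
    (σ : ℕ → Bool) (t : ℕ)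
    (σ' : ℕ → Bool) (hσ' : ∀ n, σ' n = if n < t then !σ n else σ n) :
    balGreedy v V t ≤ balSig v V σ t + balSig v V σ' t := by
  suffices h : ∀ τ, τ ≤ t → balGreedy v V τ ≤ balSig v V σ τ + balSig v V σ' τ from
    h t le_rfl
  intro τ
  induction τ with
  | zero => simp [balGreedy, balSig]
  | succ n ih =>
    intro h
    have hn : n < t := h
    have ihn := ih hn.le
    have hσ'n : σ' n = !σ n := by rw [hσ' n]; simp [hn]
    have ha := balSig_nonneg v V hv σ n
    have hb := balSig_nonneg v V hv σ' n
    set a := balSig v V σ n with hA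
    set b := balSig v V σ' n with hB
    set g := balGreedy v V n with hG
    cases hc : σ n
    · have hc' : σ' n = true := by rw [hσ'n, hc]; rfl
      show balGreedy v V (n+1) ≤ balSig v V σ (n+1) + balSig v V σ' (n+1)
      simp only [balGreedy, balSig, hc, hc', if_true, if_false, ← hA, ← hB, ← hG,
        Bool.false_eq_true]
      rcases le_total g (V n) with h1 | h1 <;>
        rcases le_total b (V n) with h2 | h2 <;>
        simp [min_eq_left, min_eq_right, h1, h2] <;> linarith [hV n]
    · have hc' : σ' n = false := by rw [hσ'n, hc]; rfl
      show balGreedy v V (n+1) ≤ balSig v V σ (n+1) + balSig v V σ' (n+1)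
      simp only [balGreedy, balSig, hc, hc', if_true, if_false, ← hA, ← hB, ← hG,
        Bool.false_eq_true]
      rcases le_total g (V n) with h1 | h1 <;>
        rcases le_total a (V n) with h2 | h2 <;>
        simp [min_eq_left, min_eq_right, h1, h2] <;> linarith [hV n]
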